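/- Let M be an NFA with L(M) ⊆ Enc and let rep_M be a token-preserving representative function for M. Let rep_M(Q²) = ⋃_{q,q'∈Q} rep_M(q, q'), let rep^E_M(Q²) = ⋃_{p,q,r∈Q} rep_M(p, q)·rep_M(q, r) (the set of edge factors), let m = |rep^E_M(Q²)|, let n = max{|w| : w ∈ rep_M(Q²)}, and let ℓ = |Q|²·(m+2)·m·2n + n. Then decode({w ∈ L(M̂_{rep_M}) : |w| ≤ ℓ}) = decode(L(M̂_{rep_M})), i.e., every pair (graph, threshold) decoded from a word of L(M̂_{rep_M}) is already decoded from a word of L(M̂_{rep_M}) of length at most ℓ. -/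

import Mathlib

/-- The fixed five-letter alphabet Σ = {▷, 1, a, #, $}. -/
inductive Letter : Type
  | tri    -- ▷
  | one    -- 1
  | lett   -- a
  | hash   -- #
  | dollar -- $
deriving DecidableEq

/-- Words over the alphabet Σ. -/
abbrev Word := List Letter

/-- A nondeterministic finite automaton over the fixed alphabet `Letter`,
with state type `Q` (assumed finite via a `Fintype` instance where needed),
transition function `δ`, initial state `q0` and final states `F`. -/
structure NFA' (Q : Type) where
  δ : Q → Letter → Set Q
  q0 : Q
  F : Set Q

namespace NFA'

variable {Q : Type}

/-- One step of the transition function on a set of states. -/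
def stepSet (M : NFA' Q) (S : Set Q) (x : Letter) : Set Q := ⋃ q ∈ S, M.δ q x

/-- The extension of the transition function to words (acting on sets of states). -/
def evalFrom (M : NFA' Q) (S : Set Q) (w : Word) : Set Q := w.foldl M.stepSet S

/-- The language accepted by `M`. -/
def lang (M : NFA' Q) : Set Word := { w | ∃ q ∈ M.F, q ∈ M.evalFrom {M.q0} w }

/-- The automaton `M[p, q]`: same transitions, initial state `p`, unique final state `q`. -/
def between (M : NFA' Q) (p q : Q) : NFA' Q := ⟨M.δ, p, {q}⟩

/-- Every state is reachable from the initial state. -/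
def Reachable (M : NFA' Q) : Prop := ∀ q : Q, ∃ w : Word, q ∈ M.evalFrom {M.q0} w

/-- From every state some final state can be reached. -/
def CoReachable (M : NFA' Q) : Prop :=
  ∀ q : Q, ∃ w : Word, ∃ f ∈ M.F, f ∈ M.evalFrom {q} w

end NFA'

/-- `rep` is a representative function for `M`: each `rep p q` is a finite subset
of `L(M[p, q])`. -/
def IsRepFun {Q : Type} (M : NFA' Q) (rep : Q → Q → Set Word) : Prop :=
  ∀ p q : Q, (rep p q).Finite ∧ rep p q ⊆ (M.between p q).lang

/-- The language `L(M̂_rep)`: all words obtained by concatenating representatives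
along a path from the initial state to a final state. -/
def hatLang {Q : Type} (M : NFA' Q) (rep : Q → Q → Set Word) : Set Word :=
  { w | ∃ (m : ℕ) (u : Fin m → Word) (qs : Fin (m + 1) → Q),
      qs 0 = M.q0 ∧ qs (Fin.last m) ∈ M.F ∧
      (∀ i : Fin m, u i ∈ rep (qs i.castSucc) (qs i.succ)) ∧
      w = (List.ofFn u).flatten }

/-- The threshold token `▷1^k$`. -/
def thresholdTok (k : ℕ) : Word := Letter.tri :: (List.replicate k Letter.one ++ [Letter.dollar])

/-- The left vertex token `▷a^p#`. -/
def leftTok (p : ℕ) : Word := Letter.tri :: (List.replicate p Letter.lett ++ [Letter.hash])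

/-- The right vertex token `▷a^q$`. -/
def rightTok (q : ℕ) : Word := Letter.tri :: (List.replicate q Letter.lett ++ [Letter.dollar])

/-- The encoding `▷1^k$ ∏_i (▷a^{p_i}# ▷a^{q_i}$)` of a threshold `k` together with a
list of (encoded) edges. -/
def encode (k : ℕ) (es : List (ℕ × ℕ)) : Word :=
  thresholdTok k ++ (es.map (fun e => leftTok e.1 ++ rightTok e.2)).flatten

/-- The regular language `Enc = ▷1*$(▷a*#▷a*$)*` of all encodings. -/
def Enc : Set Word := { w | ∃ (k : ℕ) (es : List (ℕ × ℕ)), w = encode k es }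

/-- A token: a threshold token, a left vertex token, or a right vertex token. -/
def IsToken (w : Word) : Prop :=
  (∃ k, w = thresholdTok k) ∨ (∃ p, w = leftTok p) ∨ (∃ q, w = rightTok q)

/-- A representative function is token-preserving if all representatives are tokens. -/
def TokenPreserving {Q : Type} (rep : Q → Q → Set Word) : Prop :=
  ∀ p q : Q, ∀ w ∈ rep p q, IsToken w

/-- A finite simple undirected graph with vertices named by natural numbers:
a finite vertex set and a finite set of undirected edges. -/
structure Graph' where
  V : Finset ℕ
  E : Finset (Sym2 ℕ)

/-- `G` has a vertex cover of size at most `k`. -/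
def HasVC (G : Graph') (k : ℕ) : Prop :=
  ∃ S : Finset ℕ, S ⊆ G.V ∧ S.card ≤ k ∧ ∀ e ∈ G.E, ∃ a ∈ S, a ∈ e

/-- `G` has an independent set of size at least `k`. -/
def HasIS (G : Graph') (k : ℕ) : Prop :=
  ∃ S : Finset ℕ, S ⊆ G.V ∧ k ≤ S.card ∧ ∀ a ∈ S, ∀ b ∈ S, s(a, b) ∉ G.E

/-- The graph described by a list of (encoded) edges: vertices are all the numbers
occurring, edges are the non-loop pairs. -/
def graphOf (es : List (ℕ × ℕ)) : Graph' where
  V := (es.map Prod.fst).toFinset ∪ (es.map Prod.snd).toFinset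
  E := ((es.filter (fun e => e.1 ≠ e.2)).map (fun e => s(e.1, e.2))).toFinset

/-- `decode(w) = (G, k)` : the word `w ∈ Enc` encodes the graph `G` and threshold `k`. -/
def decodesTo (w : Word) (G : Graph') (k : ℕ) : Prop :=
  ∃ es : List (ℕ × ℕ), w = encode k es ∧ G = graphOf es

/-- The set of all representatives `rep_M(Q²)`. -/
def allReps {Q : Type} (rep : Q → Q → Set Word) : Set Word := ⋃ p : Q, ⋃ q : Q, rep p q

/-- The set `rep^E_M(Q²)` of all edge factors: concatenations of a representative for
`(p, q)` with one for `(q, r)`. -/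
def edgeFactors {Q : Type} (rep : Q → Q → Set Word) : Set Word :=
  ⋃ p : Q, ⋃ q : Q, ⋃ r : Q, { w | ∃ x ∈ rep p q, ∃ y ∈ rep q r, w = x ++ y }

/-
Tokens factor uniquely, so an accepting run of `M̂_rep` on `encode k es` is a threshold
representative followed by a run whose steps each read one edge factor `▷a^p#▷a^q$`. In that
run, take two positions that reach the same state after having seen the same set of edges:
cutting out the loop between them changes neither the set of edges read (hence not the decoded
graph) nor acceptance. A loop-free run in this sense has length at most `|Q|` times the number
of distinct edge factors it reads, which bounds the length of the shortened encoding.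
-/

section Runs

variable {Q α β : Type*}

/-- A run from `p` is recorded as the list of its steps (label read, state reached). -/
def IsRun (R : Q → α → Q → Prop) : Q → List (α × Q) → Prop
  | _, [] => True
  | p, x :: z => R p x.1 x.2 ∧ IsRun R x.2 z

def runEnd (p : Q) (z : List (α × Q)) : Q := z.foldl (fun _ x => x.2) p

def labelSet [DecidableEq α] (z : List (α × Q)) : Finset α := (z.map Prod.fst).toFinset

variable {R : Q → α → Q → Prop} {p : Q} {z z₁ z₂ : List (α × Q)}

@[simp] lemma isRun_nil : IsRun R p [] := trivial

@[simp] lemma isRun_cons {x : α × Q} : IsRun R p (x :: z) ↔ R p x.1 x.2 ∧ IsRun R x.2 z :=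
  Iff.rfl

@[simp] lemma runEnd_nil : runEnd p ([] : List (α × Q)) = p := rfl

@[simp] lemma runEnd_cons {x : α × Q} : runEnd p (x :: z) = runEnd x.2 z := rfl

lemma runEnd_append : runEnd p (z₁ ++ z₂) = runEnd (runEnd p z₁) z₂ := by
  simp [runEnd, List.foldl_append]

lemma isRun_append : IsRun R p (z₁ ++ z₂) ↔ IsRun R p z₁ ∧ IsRun R (runEnd p z₁) z₂ := by
  induction z₁ generalizing p with
  | nil => simp
  | cons x z ih => simp [ih, and_assoc]

lemma IsRun.exists_rel (hz : IsRun R p z) {x : α × Q} (hx : x ∈ z) : ∃ q, R q x.1 x.2 := by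
  induction z generalizing p with
  | nil => simp at hx
  | cons y z ih =>
    rcases List.mem_cons.1 hx with rfl | hx
    exacts [⟨p, hz.1⟩, ih hz.2 hx]

lemma IsRun.removeLoop (hz : IsRun R p z) {i j : ℕ}
    (hend : runEnd p (z.take i) = runEnd p (z.take j)) :
    IsRun R p (z.take i ++ z.drop j) ∧ runEnd p (z.take i ++ z.drop j) = runEnd p z := by
  have hi := (isRun_append.1 ((z.take_append_drop i).symm ▸ hz)).1
  have hj := (isRun_append.1 ((z.take_append_drop j).symm ▸ hz)).2
  refine ⟨isRun_append.2 ⟨hi, hend ▸ hj⟩, ?_⟩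
  rw [runEnd_append, hend, ← runEnd_append, List.take_append_drop]

section LabelSet

variable [DecidableEq α]

lemma labelSet_append : labelSet (z₁ ++ z₂) = labelSet z₁ ∪ labelSet z₂ := by
  simp [labelSet, List.toFinset_append]

lemma labelSet_take_subset_take {i j : ℕ} (hij : i ≤ j) :
    labelSet (z.take i) ⊆ labelSet (z.take j) := by
  intro a
  simp only [labelSet, List.mem_toFinset, List.mem_map]
  rintro ⟨x, hx, rfl⟩
  exact ⟨x, List.take_subset_take_left z hij hx, rfl⟩

lemma labelSet_take_subset (i : ℕ) : labelSet (z.take i) ⊆ labelSet z := by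
  intro a ha
  simp only [labelSet, List.mem_toFinset] at ha ⊢
  exact List.map_subset _ (List.take_subset _ _) ha

/-- Pigeonhole over the pairs (state reached, number of labels seen so far) after each nonempty
prefix: there are at most `|Q| · |labelSet z|` of them. -/
lemma exists_loop [Fintype Q] (p : Q) (hlong : Fintype.card Q * (labelSet z).card < z.length) :
    ∃ i j, i < j ∧ j ≤ z.length ∧ runEnd p (z.take i) = runEnd p (z.take j) ∧
      labelSet (z.take i) = labelSet (z.take j) := by
  let f : ℕ → Q × ℕ := fun i => (runEnd p (z.take (i + 1)), (labelSet (z.take (i + 1))).card)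
  have hmaps : ∀ i ∈ Finset.range z.length,
      f i ∈ (Finset.univ ×ˢ Finset.Icc 1 (labelSet z).card : Finset (Q × ℕ)) := by
    intro i hi
    replace hi := Finset.mem_range.1 hi
    have hmem : z[i].1 ∈ labelSet (z.take (i + 1)) := by
      simp only [labelSet, List.mem_toFinset, List.mem_map]
      exact ⟨z[i], List.mem_take_iff_getElem.2 ⟨i, by simp_all, rfl⟩, rfl⟩
    simp only [Finset.mem_product, Finset.mem_univ, Finset.mem_Icc, true_and, f]
    exact ⟨Finset.card_pos.2 ⟨_, hmem⟩, Finset.card_le_card (labelSet_take_subset _)⟩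
  obtain ⟨a, ha, b, hb, hne, hab⟩ := Finset.exists_ne_map_eq_of_card_lt_of_maps_to
    (by simpa using hlong) hmaps
  wlog hlt : a < b generalizing a b
  · exact this b hb a ha hne.symm hab.symm (by omega)
  simp only [Prod.mk.injEq, f] at hab
  refine ⟨a + 1, b + 1, by omega, by simpa using hb, hab.1, ?_⟩
  exact Finset.eq_of_subset_of_card_le (labelSet_take_subset_take (by omega)) hab.2.ge

lemma IsRun.exists_short [Fintype Q] (hz : IsRun R p z) :
    ∃ z', IsRun R p z' ∧ runEnd p z' = runEnd p z ∧ labelSet z' = labelSet z ∧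
      z'.length ≤ Fintype.card Q * (labelSet z).card := by
  induction hN : z.length using Nat.strong_induction_on generalizing z with
  | _ N ih =>
    by_cases hshort : z.length ≤ Fintype.card Q * (labelSet z).card
    · exact ⟨z, hz, rfl, rfl, hshort⟩
    obtain ⟨i, j, hij, hj, hend, hlab⟩ := exists_loop p (not_le.1 hshort)
    obtain ⟨hrun, hend'⟩ := hz.removeLoop hend
    have hlab' : labelSet (z.take i ++ z.drop j) = labelSet z := by
      rw [labelSet_append, hlab, ← labelSet_append, List.take_append_drop]
    obtain ⟨z', hz', hend'', hlab'', hlen⟩ :=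
      ih _ (by simp only [List.length_append, List.length_take, List.length_drop]; omega) hrun rfl
    exact ⟨z', hz', hend''.trans hend', hlab''.trans hlab', hlab' ▸ hlen⟩

end LabelSet

def twoStep (R : Q → α → Q → Prop) (f g : β → α) (p : Q) (b : β) (q : Q) : Prop :=
  ∃ r, R p (f b) r ∧ R r (g b) q

lemma exists_isRun_flatMap_iff (f g : β → α) (l : List β) (q : Q) :
    (∃ z, IsRun R p z ∧ runEnd p z = q ∧ z.map Prod.fst = l.flatMap fun b => [f b, g b]) ↔
      ∃ y, IsRun (twoStep R f g) p y ∧ runEnd p y = q ∧ y.map Prod.fst = l := by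
  induction l generalizing p with
  | nil => simp
  | cons b l ih =>
    constructor
    · rintro ⟨_ | ⟨⟨u, r⟩, _ | ⟨⟨v, s⟩, z⟩⟩, hz, hend, hmap⟩
      · simp at hmap
      · simp at hmap
      simp only [List.map_cons, List.flatMap_cons, List.cons_append, List.nil_append,
        List.cons.injEq] at hmap
      obtain ⟨rfl, rfl, hmap⟩ := hmap
      obtain ⟨y, hy, rfl, rfl⟩ := ih.1 ⟨z, hz.2.2, hend, hmap⟩
      exact ⟨(b, s) :: y, ⟨⟨r, hz.1, hz.2.1⟩, hy⟩, rfl, rfl⟩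
    · rintro ⟨_ | ⟨⟨b', s⟩, y⟩, hy, hend, hmap⟩
      · simp at hmap
      simp only [List.map_cons, List.cons.injEq] at hmap
      obtain ⟨rfl, hmap⟩ := hmap
      obtain ⟨r, hr, hs⟩ := hy.1
      obtain ⟨z, hz, rfl, hmap⟩ := ih.2 ⟨y, hy.2, hend, hmap⟩
      exact ⟨(f b', r) :: (g b', s) :: z, ⟨hr, hs, hz⟩, rfl, by simp [hmap]⟩

lemma isRun_ofFn {m : ℕ} (u : Fin m → α) (qs : Fin (m + 1) → Q)
    (h : ∀ i, R (qs i.castSucc) (u i) (qs i.succ)) :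
    IsRun R (qs 0) (List.ofFn fun i => (u i, qs i.succ)) ∧
      runEnd (qs 0) (List.ofFn fun i => (u i, qs i.succ)) = qs (Fin.last m) := by
  induction m with
  | zero => simp
  | succ m ih =>
    obtain ⟨hrun, hend⟩ := ih (fun i => u i.succ) (fun i => qs i.succ)
      fun i => by simpa [← Fin.succ_castSucc] using h i.succ
    rw [List.ofFn_succ]
    exact ⟨⟨by simpa using h 0, hrun⟩, by simpa [Fin.succ_last] using hend⟩

lemma IsRun.exists_ofFn (hz : IsRun R p z) :
    ∃ (u : Fin z.length → α) (qs : Fin (z.length + 1) → Q),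
      qs 0 = p ∧ qs (Fin.last z.length) = runEnd p z ∧
      (∀ i, R (qs i.castSucc) (u i) (qs i.succ)) ∧ List.ofFn u = z.map Prod.fst := by
  induction z generalizing p with
  | nil => exact ⟨Fin.elim0, fun _ => p, rfl, rfl, fun i => i.elim0, rfl⟩
  | cons x z ih =>
    obtain ⟨u, qs, h0, hlast, hstep, hlab⟩ := ih hz.2
    refine ⟨Fin.cons x.1 u, Fin.cons p qs, rfl, ?_, ?_, by simp [List.ofFn_succ, hlab]⟩
    · simpa [← Fin.succ_last] using hlast
    · intro i
      induction i using Fin.cases with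
      | zero => simpa [h0] using hz.1
      | succ j => simpa [← Fin.succ_castSucc] using hstep j

end Runs

section Tokens

lemma IsToken.exists_eq {t : Word} (ht : IsToken t) :
    ∃ b d, t = .tri :: (b ++ [d]) ∧ (d = .hash ∨ d = .dollar) ∧ .hash ∉ b ∧ .dollar ∉ b := by
  rcases ht with ⟨k, rfl⟩ | ⟨k, rfl⟩ | ⟨k, rfl⟩
  · exact ⟨_, .dollar, rfl, by simp [List.mem_replicate]⟩
  · exact ⟨_, .hash, rfl, by simp [List.mem_replicate]⟩
  · exact ⟨_, .dollar, rfl, by simp [List.mem_replicate]⟩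

/-- A token ends with its only `#` or `$`, so it cannot be a proper prefix of another one. -/
lemma IsToken.eq_of_prefix {t s : Word} (ht : IsToken t) (hs : IsToken s) (h : t <+: s) :
    t = s := by
  obtain ⟨u, rfl⟩ := h
  rcases List.eq_nil_or_concat u with rfl | ⟨u, c, rfl⟩
  · simp
  obtain ⟨bt, dt, rfl, hdt, -⟩ := ht.exists_eq
  obtain ⟨bs, ds, hts, -, hbs⟩ := hs.exists_eq
  have hbody : bt ++ dt :: u = bs := by
    have : (bt ++ dt :: u) ++ [c] = bs ++ [ds] := by simpa using hts
    exact (List.append_inj' this rfl).1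
  have : dt ∈ bs := hbody ▸ by simp
  rcases hdt with rfl | rfl <;> simp_all

lemma IsToken.append_inj {t s r r' : Word} (ht : IsToken t) (hs : IsToken s)
    (h : t ++ r = s ++ r') : t = s ∧ r = r' := by
  have hts : t = s := by
    rcases List.prefix_or_prefix_of_prefix (List.prefix_append t r)
      (h ▸ List.prefix_append s r') with hp | hp
    exacts [ht.eq_of_prefix hs hp, (hs.eq_of_prefix ht hp).symm]
  subst hts
  exact ⟨rfl, List.append_cancel_left h⟩

lemma flatten_inj_of_isToken {A B : List Word} (hA : ∀ t ∈ A, IsToken t)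
    (hB : ∀ t ∈ B, IsToken t) (h : A.flatten = B.flatten) : A = B := by
  induction A generalizing B with
  | nil =>
    rcases B with _ | ⟨s, B⟩
    · rfl
    · obtain ⟨b, d, hs, -⟩ := (hB s (by simp)).exists_eq
      simp [hs] at h
  | cons t A ih =>
    rcases B with _ | ⟨s, B⟩
    · obtain ⟨b, d, ht, -⟩ := (hA t (by simp)).exists_eq
      simp [ht] at h
    · obtain ⟨rfl, hrest⟩ := (hA t (by simp)).append_inj (hB s (by simp)) h
      rw [ih (fun x hx => hA x (by simp [hx])) (fun x hx => hB x (by simp [hx])) hrest]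

lemma encode_eq_flatten (k : ℕ) (es : List (ℕ × ℕ)) :
    encode k es = (thresholdTok k :: es.flatMap fun e => [leftTok e.1, rightTok e.2]).flatten := by
  simp only [encode, List.flatten_cons]
  congr 1
  induction es with
  | nil => rfl
  | cons e es ih => simp [ih]

lemma isToken_of_mem_encode_tokens {k : ℕ} {es : List (ℕ × ℕ)} {t : Word}
    (ht : t ∈ thresholdTok k :: es.flatMap fun e => [leftTok e.1, rightTok e.2]) :
    IsToken t := by
  simp only [List.mem_cons, List.mem_flatMap, List.not_mem_nil, or_false] at ht
  rcases ht with rfl | ⟨e, -, rfl | rfl⟩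
  exacts [Or.inl ⟨k, rfl⟩, Or.inr (Or.inl ⟨_, rfl⟩), Or.inr (Or.inr ⟨_, rfl⟩)]

def edgeFactor (e : ℕ × ℕ) : Word := leftTok e.1 ++ rightTok e.2

lemma edgeFactor_injective : Function.Injective edgeFactor := by
  intro e e' h
  obtain ⟨h₁, h₂⟩ := IsToken.append_inj (Or.inr (Or.inl ⟨_, rfl⟩)) (Or.inr (Or.inl ⟨_, rfl⟩)) h
  have h₁ := congrArg List.length h₁
  have h₂ := congrArg List.length h₂
  simp only [leftTok, rightTok, List.length_cons, List.length_append, List.length_replicate,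
    add_left_inj] at h₁ h₂
  exact Prod.ext h₁ h₂

lemma length_encode_le {k n : ℕ} {es : List (ℕ × ℕ)} (hk : (thresholdTok k).length ≤ n)
    (hes : ∀ e ∈ es, (edgeFactor e).length ≤ 2 * n) :
    (encode k es).length ≤ n + es.length * (2 * n) := by
  have hsum := List.sum_le_card_nsmul ((es.map edgeFactor).map List.length) (2 * n) (by
    simp only [List.map_map, List.mem_map]
    rintro _ ⟨e, he, rfl⟩
    exact hes e he)
  simp only [List.length_map, smul_eq_mul] at hsum
  simp only [encode, List.length_append, List.length_flatten]
  exact add_le_add hk hsum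

lemma graphOf_congr {es₁ es₂ : List (ℕ × ℕ)} (h : es₁.toFinset = es₂.toFinset) :
    graphOf es₁ = graphOf es₂ := by
  have hmem : ∀ e, e ∈ es₁ ↔ e ∈ es₂ := fun e => by
    rw [← List.mem_toFinset, h, List.mem_toFinset]
  simp only [graphOf, Graph'.mk.injEq]
  constructor <;> ext <;> simp [hmem]

end Tokens

section Representatives

variable {Q : Type} {rep : Q → Q → Set Word}

/-- A step of `M̂_rep`: reading a representative of `rep p q` leads from `p` to `q`. -/
def repRel (rep : Q → Q → Set Word) (p : Q) (u : Word) (q : Q) : Prop := u ∈ rep p q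

abbrev edgeRel (rep : Q → Q → Set Word) : Q → ℕ × ℕ → Q → Prop :=
  twoStep (repRel rep) (fun e => leftTok e.1) (fun e => rightTok e.2)

lemma mem_hatLang_iff {M : NFA' Q} {w : Word} :
    w ∈ hatLang M rep ↔ ∃ z, IsRun (repRel rep) M.q0 z ∧ runEnd M.q0 z ∈ M.F ∧
      w = (z.map Prod.fst).flatten := by
  constructor
  · rintro ⟨m, u, qs, h0, hF, hstep, rfl⟩
    obtain ⟨hrun, hend⟩ := isRun_ofFn (R := repRel rep) u qs hstep
    refine ⟨_, h0 ▸ hrun, h0 ▸ hend ▸ hF, ?_⟩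
    simp [List.map_ofFn, Function.comp_def]
  · rintro ⟨z, hz, hF, rfl⟩
    obtain ⟨u, qs, h0, hlast, hstep, hlab⟩ := hz.exists_ofFn
    exact ⟨z.length, u, qs, h0, hlast ▸ hF, hstep, hlab ▸ rfl⟩

lemma encode_mem_hatLang_iff (htok : TokenPreserving rep) {M : NFA' Q} {k : ℕ}
    {es : List (ℕ × ℕ)} :
    encode k es ∈ hatLang M rep ↔ ∃ q, thresholdTok k ∈ rep M.q0 q ∧
      ∃ y, IsRun (edgeRel rep) q y ∧ runEnd q y ∈ M.F ∧ y.map Prod.fst = es := by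
  rw [mem_hatLang_iff, encode_eq_flatten]
  constructor
  · rintro ⟨z, hz, hF, hw⟩
    have hlab := flatten_inj_of_isToken
      (fun t ht => ?_) (fun t ht => isToken_of_mem_encode_tokens ht) hw.symm
    · rcases z with _ | ⟨⟨u, q⟩, z⟩
      · simp at hlab
      simp only [List.map_cons, List.cons.injEq] at hlab
      obtain ⟨rfl, hlab⟩ := hlab
      obtain ⟨y, hy, hend, rfl⟩ := (exists_isRun_flatMap_iff _ _ es _).1 ⟨z, hz.2, rfl, hlab⟩
      exact ⟨q, hz.1, y, hy, hend ▸ hF, rfl⟩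
    · obtain ⟨x, hx, rfl⟩ := List.mem_map.1 ht
      obtain ⟨p, hp⟩ := hz.exists_rel hx
      exact htok _ _ _ hp
  · rintro ⟨q, hq, y, hy, hF, rfl⟩
    obtain ⟨z, hz, hend, hlab⟩ := (exists_isRun_flatMap_iff _ _ _ _).2 ⟨y, hy, rfl, rfl⟩
    exact ⟨(thresholdTok k, q) :: z, ⟨hq, hz⟩, hend ▸ hF, by simp [hlab]⟩

lemma mem_allReps {p q : Q} {w : Word} (h : w ∈ rep p q) : w ∈ allReps rep :=
  Set.mem_iUnion.2 ⟨p, Set.mem_iUnion.2 ⟨q, h⟩⟩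

lemma edgeFactor_mem_edgeFactors {p q : Q} {e : ℕ × ℕ} (h : edgeRel rep p e q) :
    edgeFactor e ∈ edgeFactors rep := by
  obtain ⟨r, hl, hr⟩ := h
  exact Set.mem_iUnion.2 ⟨p, Set.mem_iUnion.2 ⟨r, Set.mem_iUnion.2 ⟨q, _, hl, _, hr, rfl⟩⟩⟩

lemma allReps_finite  [Finite Q] (hfin : ∀ p q, (rep p q).Finite) : (allReps rep).Finite :=
  Set.finite_iUnion fun p => Set.finite_iUnion fun q => hfin p q

lemma edgeFactors_finite  [Finite Q] (hfin : ∀ p q, (rep p q).Finite) : (edgeFactors rep).Finite :=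
  Set.finite_iUnion fun p => Set.finite_iUnion fun q => Set.finite_iUnion fun r =>
    ((hfin p q).image2 (· ++ ·) (hfin q r)).subset
      (by rintro _ ⟨x, hx, y, hy, rfl⟩; exact Set.mem_image2_of_mem hx hy)

lemma length_le_sSup_of_mem_allReps  [Finite Q] (hfin : ∀ p q, (rep p q).Finite) {w : Word}
    (hw : w ∈ allReps rep) : w.length ≤ sSup { l : ℕ | ∃ w ∈ allReps rep, w.length = l } :=
  le_csSup (((allReps_finite hfin).image List.length).bddAbove) ⟨w, hw, rfl⟩

lemma length_le_of_mem_edgeFactors {n : ℕ} (hn : ∀ w ∈ allReps rep, w.length ≤ n) {w : Word}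
    (hw : w ∈ edgeFactors rep) : w.length ≤ 2 * n := by
  simp only [edgeFactors, Set.mem_iUnion] at hw
  obtain ⟨p, q, r, x, hx, y, hy, rfl⟩ := hw
  have := hn x (mem_allReps hx)
  have := hn y (mem_allReps hy)
  rw [List.length_append]
  omega

lemma card_labelSet_le_ncard_edgeFactors  [Finite Q] (hfin : ∀ p q, (rep p q).Finite) {p : Q}
    {y : List ((ℕ × ℕ) × Q)} (hy : IsRun (edgeRel rep) p y) :
    (labelSet y).card ≤ (edgeFactors rep).ncard := by
  have hsub : (((labelSet y).image edgeFactor : Finset Word) : Set Word) ⊆ edgeFactors rep := by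
    intro w hw
    simp only [Finset.coe_image, Set.mem_image, Finset.mem_coe, labelSet, List.mem_toFinset,
      List.mem_map] at hw
    obtain ⟨_, ⟨x, hx, rfl⟩, rfl⟩ := hw
    obtain ⟨q, hq⟩ := hy.exists_rel hx
    exact edgeFactor_mem_edgeFactors hq
  calc (labelSet y).card = ((labelSet y).image edgeFactor).card :=
        (Finset.card_image_of_injective _ edgeFactor_injective).symm
    _ ≤ (edgeFactors rep).ncard := by
        rw [← Set.ncard_coe_finset]; exact Set.ncard_le_ncard hsub (edgeFactors_finite hfin)

end Representatives

theorem stmt3_general {Q : Type} [Fintype Q] (M : NFA' Q)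
    (rep : Q → Q → Set Word) (hrep : IsRepFun M rep) (htok : TokenPreserving rep)
    (m n ℓ : ℕ)
    (hm : m = (edgeFactors rep).ncard)
    (hn : n = sSup { l : ℕ | ∃ w ∈ allReps rep, w.length = l })
    (hℓ : ℓ = (Fintype.card Q) ^ 2 * (m + 2) * m * (2 * n) + n) :
    ∀ (G : Graph') (k : ℕ),
      (∃ w ∈ hatLang M rep, decodesTo w G k) ↔
        (∃ w ∈ hatLang M rep, w.length ≤ ℓ ∧ decodesTo w G k) := by
  intro G k
  refine ⟨?_, fun ⟨w, hw, _, hd⟩ => ⟨w, hw, hd⟩⟩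
  rintro ⟨_, hw, es, rfl, rfl⟩
  have hfin : ∀ p q, (rep p q).Finite := fun p q => (hrep p q).1
  have hlen : ∀ w ∈ allReps rep, w.length ≤ n := fun w hw =>
    hn ▸ length_le_sSup_of_mem_allReps hfin hw
  obtain ⟨q, hthr, y, hy, hF, rfl⟩ := (encode_mem_hatLang_iff htok).1 hw
  obtain ⟨y', hy', hend, hlab, hshort⟩ := hy.exists_short
  have hcard : (labelSet y).card ≤ m := hm ▸ card_labelSet_le_ncard_edgeFactors hfin hy
  refine ⟨_, (encode_mem_hatLang_iff htok).2 ⟨q, hthr, y', hy', hend ▸ hF, rfl⟩, ?_,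
    _, rfl, graphOf_congr hlab.symm⟩
  have hedges : ∀ e ∈ y'.map Prod.fst, (edgeFactor e).length ≤ 2 * n := fun e he => by
    obtain ⟨x, hx, rfl⟩ := List.mem_map.1 he
    obtain ⟨p, hp⟩ := hy'.exists_rel hx
    exact length_le_of_mem_edgeFactors hlen (edgeFactor_mem_edgeFactors hp)
  calc _ ≤ n + y'.length * (2 * n) := by
        simpa using length_encode_le (hlen _ (mem_allReps hthr)) hedges
    _ ≤ n + (Fintype.card Q ^ 2 * (m + 2) * m) * (2 * n) := by
        gcongr
        calc y'.length ≤ Fintype.card Q * m := hshort.trans (Nat.mul_le_mul_left _ hcard)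
          _ ≤ Fintype.card Q ^ 2 * (m + 2) * m := by
            rw [mul_assoc]
            exact Nat.mul_le_mul (Nat.le_self_pow two_ne_zero _)
              (Nat.le_mul_of_pos_left m (by omega))
    _ = ℓ := by rw [hℓ]; ring

/-- With `m = |rep^E_M(Q²)|`, `n = max{|w| : w ∈ rep_M(Q²)}` and
`ℓ = |Q|²·(m+2)·m·2n + n`, every pair (graph, threshold) decoded from a word of
`L(M̂_rep)` is already decoded from a word of `L(M̂_rep)` of length at most `ℓ`. -/
theorem stmt3 {Q : Type} [Fintype Q] (M : NFA' Q)
    (hEnc : M.lang ⊆ Enc) (hre : M.Reachable) (hco : M.CoReachable)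
    (rep : Q → Q → Set Word) (hrep : IsRepFun M rep) (htok : TokenPreserving rep)
    (m n ℓ : ℕ)
    (hm : m = (edgeFactors rep).ncard)
    (hn : n = sSup { l : ℕ | ∃ w ∈ allReps rep, w.length = l })
    (hℓ : ℓ = (Fintype.card Q) ^ 2 * (m + 2) * m * (2 * n) + n) :
    ∀ (G : Graph') (k : ℕ),
      (∃ w ∈ hatLang M rep, decodesTo w G k) ↔
        (∃ w ∈ hatLang M rep, w.length ≤ ℓ ∧ decodesTo w G k) :=
  stmt3_general M rep hrep htok m n ℓ hm hn hℓ
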